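/- Tangency condition for the two arcs of a biarc: Let c > 0, α, β ∈ ℝ, and a, b ∈ ℝ with a ≠ 0 and b ≠ 0; set ω = (α + β)/2. Let O₁ = (−c, 0) + (1/a)·(−sin α, cos α) be the center of the circle of signed curvature a passing through (−c, 0) with tangent direction (cos α, sin α), and let O₂ = (c, 0) + (1/b)·(−sin β, cos β) be the center of the circle of signed curvature b passing through (c, 0) with tangent direction (cos β, sin β). Then ‖O₁ − O₂‖² − (1/a − 1/b)² = (4/(a·b))·((a·c + sin α)·(b·c − sin β) + sin² ω). In particular, the two circles satisfy the internal tangency relation ‖O₁ − O₂‖ = |1/a − 1/b| if and only if (a·c + sin α)·(b·c − sin β) + sin² ω = 0. -/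

import Mathlib

/-! In coordinates, the unit tangent terms contribute `2 (1 - cos (α - β)) / (a b)` to
`‖O₁ - O₂‖² - (1/a - 1/b)²`, and `(1 - cos (α - β)) / 2 = sin² ω - sin α sin β`; the rest is
polynomial algebra. Since `‖O₁ - O₂‖ ≥ 0`, tangency is the vanishing of that difference. -/

noncomputable def pt2 (x y : ℝ) : EuclideanSpace ℝ (Fin 2) :=
  (WithLp.equiv 2 (Fin 2 → ℝ)).symm ![x, y]

lemma pt2_add_pt2 (x y x' y' : ℝ) : pt2 x y + pt2 x' y' = pt2 (x + x') (y + y') := by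
  ext i; fin_cases i <;> simp [pt2]

lemma pt2_sub_pt2 (x y x' y' : ℝ) : pt2 x y - pt2 x' y' = pt2 (x - x') (y - y') := by
  ext i; fin_cases i <;> simp [pt2]

lemma smul_pt2 (r x y : ℝ) : r • pt2 x y = pt2 (r * x) (r * y) := by
  ext i; fin_cases i <;> simp [pt2]

lemma norm_pt2_sq (x y : ℝ) : ‖pt2 x y‖ ^ 2 = x ^ 2 + y ^ 2 := by
  rw [EuclideanSpace.norm_eq, Real.sq_sqrt (by positivity)]
  simp [pt2, Fin.sum_univ_two]

lemma Real.sin_sq_add_div_two (α β : ℝ) :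
    Real.sin ((α + β) / 2) ^ 2 = Real.sin α * Real.sin β + (1 - Real.cos (α - β)) / 2 := by
  rw [Real.sin_sq_eq_half_sub, mul_div_cancel₀ _ two_ne_zero, Real.cos_add, Real.cos_sub]
  ring

lemma biarc_center_dist_sq_sub_sq (c α β a b : ℝ) (ha : a ≠ 0) (hb : b ≠ 0) :
    (-c + 1 / a * -Real.sin α - (c + 1 / b * -Real.sin β)) ^ 2
        + (1 / a * Real.cos α - 1 / b * Real.cos β) ^ 2 - (1 / a - 1 / b) ^ 2 =
      4 / (a * b) * ((a * c + Real.sin α) * (b * c - Real.sin β)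
        + Real.sin ((α + β) / 2) ^ 2) := by
  rw [Real.sin_sq_add_div_two, Real.cos_sub]
  field_simp
  linear_combination (2 * b ^ 2) * Real.sin_sq_add_cos_sq α + (2 * a ^ 2) * Real.sin_sq_add_cos_sq β

theorem biarc_tangency_condition_general (c α β a b : ℝ)
    (ha : a ≠ 0) (hb : b ≠ 0)
    (ω : ℝ) (hω : ω = (α + β) / 2)
    (O₁ O₂ : EuclideanSpace ℝ (Fin 2))
    (hO₁ : O₁ = pt2 (-c) 0 + (1 / a) • pt2 (-Real.sin α) (Real.cos α))
    (hO₂ : O₂ = pt2 c 0 + (1 / b) • pt2 (-Real.sin β) (Real.cos β)) :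
    ‖O₁ - O₂‖ ^ 2 - (1 / a - 1 / b) ^ 2 =
      4 / (a * b) * ((a * c + Real.sin α) * (b * c - Real.sin β) + Real.sin ω ^ 2) ∧
    (‖O₁ - O₂‖ = |1 / a - 1 / b| ↔
      (a * c + Real.sin α) * (b * c - Real.sin β) + Real.sin ω ^ 2 = 0) := by
  have hpower : ‖O₁ - O₂‖ ^ 2 - (1 / a - 1 / b) ^ 2 =
      4 / (a * b) * ((a * c + Real.sin α) * (b * c - Real.sin β) + Real.sin ω ^ 2) := by
    rw [hO₁, hO₂, smul_pt2, smul_pt2, pt2_add_pt2, pt2_add_pt2, pt2_sub_pt2, norm_pt2_sq, hω]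
    simpa using biarc_center_dist_sq_sub_sq c α β a b ha hb
  refine ⟨hpower, ?_⟩
  rw [← abs_norm, ← sq_eq_sq_iff_abs_eq_abs, ← sub_eq_zero, hpower]
  simp [ha, hb]

/-- Tangency condition for the two arcs of a biarc: with
`O₁ = (−c,0) + (1/a)·(−sin α, cos α)` and `O₂ = (c,0) + (1/b)·(−sin β, cos β)`,
one has `‖O₁ − O₂‖² − (1/a − 1/b)² = (4/(ab))·((ac + sin α)(bc − sin β) + sin² ω)`
where `ω = (α + β)/2`; in particular the internal tangency relation
`‖O₁ − O₂‖ = |1/a − 1/b|` holds iff `(ac + sin α)(bc − sin β) + sin² ω = 0`. -/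
theorem biarc_tangency_condition (c α β a b : ℝ) (hc : 0 < c)
    (ha : a ≠ 0) (hb : b ≠ 0)
    (ω : ℝ) (hω : ω = (α + β) / 2)
    (O₁ O₂ : EuclideanSpace ℝ (Fin 2))
    (hO₁ : O₁ = pt2 (-c) 0 + (1 / a) • pt2 (-Real.sin α) (Real.cos α))
    (hO₂ : O₂ = pt2 c 0 + (1 / b) • pt2 (-Real.sin β) (Real.cos β)) :
    ‖O₁ - O₂‖ ^ 2 - (1 / a - 1 / b) ^ 2 =
      4 / (a * b) * ((a * c + Real.sin α) * (b * c - Real.sin β) + Real.sin ω ^ 2) ∧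
    (‖O₁ - O₂‖ = |1 / a - 1 / b| ↔
      (a * c + Real.sin α) * (b * c - Real.sin β) + Real.sin ω ^ 2 = 0) :=
  biarc_tangency_condition_general c α β a b ha hb ω hω O₁ O₂ hO₁ hO₂
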